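/- arXiv:2009.13100 — 2 statements merged into one kernel-verified Lean document; each statement's English description precedes it below -/
import Mathlib

section
/- Let d ≥ 1, m ≠ 0, λ ≥ 0. For every l ∈ ℕ₀ and every x ∈ ℕ with x ≥ 1, there exists a constant B ≥ 0 such that for all k > 0: sup_{p,q,r ∈ ℝ^d} |∂_k^l κ₄(p,q,r;k)| ≤ B · |m|^{4−d} · k^x / (k + |m|)^{x+l}. -/
/-!
As a function of `k`, `κ₄` is `C · exp (-a / k)` with `a = (‖p‖^d + … + |m|^d) / |m|^(d-1) ≥ |m|`.
Its `l`-th derivative is `P_l(a/k) · k^(-l) · exp (-a/k)` for an explicit polynomial `P_l`. With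
`t = a / k`, the bound `k^x / (k + a)^(x+l)` becomes `k^(-l) / (1 + t)^(x+l)`, so it suffices that
`|P_l(t)| (1 + t)^(x+l) e^(-t)` is bounded on `t ≥ 0`, which follows from
`(1 + t)^n ≤ n! e^(1+t)`. Finally `k + a ≥ k + |m|` makes the bound uniform in `p, q, r`.
-/

/-- The four-point function ansatz
`κ₄(p,q,r;k) = λ|m|^{4−d} exp[−(‖p‖^d + ‖q‖^d + ‖r‖^d + ‖p+q+r‖^d + |m|^d)/(k|m|^{d−1})]`. -/
noncomputable def kappa4 (d : ℕ) (m lam : ℝ) (p q r : EuclideanSpace ℝ (Fin d)) (k : ℝ) : ℝ :=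
  lam * |m| ^ ((4 : ℤ) - (d : ℤ)) *
    Real.exp (-((‖p‖ ^ d + ‖q‖ ^ d + ‖r‖ ^ d + ‖p + q + r‖ ^ d + |m| ^ d)
      / (k * |m| ^ ((d : ℤ) - 1))))

open Polynomial Real

noncomputable def expNegDivDerivPoly : ℕ → ℝ[X]
  | 0 => 1
  | l + 1 => X * (expNegDivDerivPoly l - derivative (expNegDivDerivPoly l)) -
      (l : ℝ) • expNegDivDerivPoly l

theorem iteratedDeriv_exp_neg_div (a : ℝ) (l : ℕ) {k : ℝ} (hk : 0 < k) :
    iteratedDeriv l (fun s => exp (-(a / s))) k =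
      (expNegDivDerivPoly l).eval (a / k) * (k ^ l)⁻¹ * exp (-(a / k)) := by
  induction l generalizing k with
  | zero => simp [expNegDivDerivPoly]
  | succ l ih =>
    have h_eq : iteratedDeriv l (fun s => exp (-(a / s))) =ᶠ[nhds k]
        fun s => (expNegDivDerivPoly l).eval (a / s) * (s ^ l)⁻¹ * exp (-(a / s)) := by
      filter_upwards [isOpen_Ioi.mem_nhds hk] with s hs using ih hs
    have h_div : HasDerivAt (fun s : ℝ => a / s) (a * -(k ^ 2)⁻¹) k := by
      simpa [div_eq_mul_inv] using (hasDerivAt_inv hk.ne').const_mul a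
    have h_poly := (expNegDivDerivPoly l).hasDerivAt (a / k) |>.comp k h_div
    have h_pow : HasDerivAt (fun s : ℝ => (s ^ l)⁻¹) (-l * (k ^ (l + 1))⁻¹) k := by
      have h := hasDerivAt_zpow (-(l : ℤ)) k (Or.inl hk.ne')
      rw [show -(l : ℤ) - 1 = -((l + 1 : ℕ) : ℤ) by push_cast; ring] at h
      simpa only [zpow_neg, zpow_natCast, Int.cast_neg, Int.cast_natCast, neg_mul] using h
    have h_exp := (hasDerivAt_exp _).comp k h_div.neg
    have h_deriv : HasDerivAt
        (fun s => (expNegDivDerivPoly l).eval (a / s) * (s ^ l)⁻¹ * exp (-(a / s))) _ k :=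
      (h_poly.mul h_pow).mul h_exp
    rw [iteratedDeriv_succ, h_eq.deriv_eq, h_deriv.deriv]
    simp only [expNegDivDerivPoly, eval_sub, eval_mul, eval_X, eval_smul, smul_eq_mul,
      Function.comp_apply, Pi.mul_apply, Pi.neg_apply]
    field_simp
    ring

theorem abs_eval_le_of_nonneg (P : ℝ[X]) {t : ℝ} (ht : 0 ≤ t) :
    |P.eval t| ≤ (∑ j ∈ Finset.range (P.natDegree + 1), |P.coeff j|) * (1 + t) ^ P.natDegree := by
  rw [eval_eq_sum_range, Finset.sum_mul]
  refine (Finset.abs_sum_le_sum_abs _ _).trans (Finset.sum_le_sum fun j hj => ?_)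
  rw [abs_mul, abs_pow, abs_of_nonneg ht]
  gcongr
  calc t ^ j ≤ (1 + t) ^ j := by gcongr; linarith
    _ ≤ (1 + t) ^ P.natDegree := pow_le_pow_right₀ (by linarith) (Finset.mem_range_succ_iff.mp hj)

theorem one_add_pow_mul_exp_neg_le (n : ℕ) {t : ℝ} (ht : 0 ≤ t) :
    (1 + t) ^ n * exp (-t) ≤ exp 1 * n.factorial := by
  have h := pow_div_factorial_le_exp (x := 1 + t) (by linarith) n
  rw [div_le_iff₀ (by positivity), exp_add] at h
  calc (1 + t) ^ n * exp (-t) ≤ exp 1 * exp t * n.factorial * exp (-t) := by gcongr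
    _ = exp 1 * n.factorial := by rw [exp_neg]; field_simp

theorem exists_abs_eval_mul_exp_neg_le (P : ℝ[X]) (n : ℕ) :
    ∃ B, 0 ≤ B ∧ ∀ t, 0 ≤ t → |P.eval t| * exp (-t) ≤ B / (1 + t) ^ n := by
  set N := P.natDegree
  set C := ∑ j ∈ Finset.range (N + 1), |P.coeff j|
  refine ⟨C * (exp 1 * (N + n).factorial), by positivity, fun t ht => ?_⟩
  rw [le_div_iff₀ (by positivity)]
  calc |P.eval t| * exp (-t) * (1 + t) ^ n
      ≤ C * (1 + t) ^ N * exp (-t) * (1 + t) ^ n := by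
        gcongr; exact abs_eval_le_of_nonneg P ht
    _ = C * ((1 + t) ^ (N + n) * exp (-t)) := by ring
    _ ≤ C * (exp 1 * (N + n).factorial) :=
        mul_le_mul_of_nonneg_left (one_add_pow_mul_exp_neg_le _ ht) (by positivity)

theorem exists_abs_iteratedDeriv_exp_neg_div_le (l x : ℕ) :
    ∃ B, 0 ≤ B ∧ ∀ a k : ℝ, 0 ≤ a → 0 < k →
      |iteratedDeriv l (fun s => exp (-(a / s))) k| ≤ B * (k ^ x / (k + a) ^ (x + l)) := by
  obtain ⟨B, hB, hbound⟩ := exists_abs_eval_mul_exp_neg_le (expNegDivDerivPoly l) (x + l)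
  refine ⟨B, hB, fun a k ha hk => ?_⟩
  have h_rhs : B * (k ^ x / (k + a) ^ (x + l)) = B / (1 + a / k) ^ (x + l) * (k ^ l)⁻¹ := by
    rw [one_add_div hk.ne', div_pow]
    field_simp
    ring
  rw [iteratedDeriv_exp_neg_div a l hk, h_rhs, abs_mul, abs_mul, abs_of_pos (exp_pos _),
    abs_of_pos (by positivity : (0 : ℝ) < (k ^ l)⁻¹), mul_right_comm]
  gcongr
  exact hbound _ (by positivity)

theorem le_div_zpow_sub_one {μ A : ℝ} (hμ : 0 < μ) (d : ℕ) (h : μ ^ d ≤ A) :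
    μ ≤ A / μ ^ ((d : ℤ) - 1) := by
  rw [le_div_iff₀ (zpow_pos hμ _), ← zpow_one_add₀ hμ.ne', add_sub_cancel, zpow_natCast]
  exact h

theorem stmt_12_general (d : ℕ) (m lam : ℝ) (hm : m ≠ 0)
    (l x : ℕ) :
    ∃ B : ℝ, 0 ≤ B ∧ ∀ k : ℝ, 0 < k → ∀ p q r : EuclideanSpace ℝ (Fin d),
      |iteratedDeriv l (fun s => kappa4 d m lam p q r s) k|
        ≤ B * |m| ^ ((4 : ℤ) - (d : ℤ)) * k ^ x / (k + |m|) ^ (x + l) := by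
  obtain ⟨B, hB, hbound⟩ := exists_abs_iteratedDeriv_exp_neg_div_le l x
  refine ⟨|lam| * B, by positivity, fun k hk p q r => ?_⟩
  have hμ : 0 < |m| := abs_pos.mpr hm
  set a := (‖p‖ ^ d + ‖q‖ ^ d + ‖r‖ ^ d + ‖p + q + r‖ ^ d + |m| ^ d) / |m| ^ ((d : ℤ) - 1)
  have ha : |m| ≤ a := le_div_zpow_sub_one hμ d (le_add_of_nonneg_left (by positivity))
  have h_kappa : (fun s => kappa4 d m lam p q r s) =
      fun s => lam * |m| ^ ((4 : ℤ) - (d : ℤ)) * exp (-(a / s)) := by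
    ext s
    rw [kappa4, div_div, mul_comm s]
  rw [h_kappa, iteratedDeriv_const_mul_field, abs_mul, abs_mul,
    abs_of_pos (zpow_pos hμ _)]
  calc |lam| * |m| ^ ((4 : ℤ) - d) * |iteratedDeriv l (fun s => exp (-(a / s))) k|
      ≤ |lam| * |m| ^ ((4 : ℤ) - d) * (B * (k ^ x / (k + a) ^ (x + l))) := by
        gcongr; exact hbound a k (hμ.le.trans ha) hk
    _ ≤ |lam| * |m| ^ ((4 : ℤ) - d) * (B * (k ^ x / (k + |m|) ^ (x + l))) := by gcongr
    _ = |lam| * B * |m| ^ ((4 : ℤ) - d) * k ^ x / (k + |m|) ^ (x + l) := by ring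

theorem stmt_12 (d : ℕ) (hd : 1 ≤ d) (m lam : ℝ) (hm : m ≠ 0) (hlam : 0 ≤ lam)
    (l x : ℕ) (hx : 1 ≤ x) :
    ∃ B : ℝ, 0 ≤ B ∧ ∀ k : ℝ, 0 < k → ∀ p q r : EuclideanSpace ℝ (Fin d),
      |iteratedDeriv l (fun s => kappa4 d m lam p q r s) k|
        ≤ B * |m| ^ ((4 : ℤ) - (d : ℤ)) * k ^ x / (k + |m|) ^ (x + l) :=
  stmt_12_general d m lam hm l x
end

section
/- Let d ≥ 1, m ∈ ℝ, k > 0, and let κ₂ : ℝ^d → ℝ satisfy κ₂(q) ≥ m² + ‖q‖² for all q. Then for every q ∈ ℝ^d: ∂_k r̄(q;k) / (κ₂(q) + r̄(q;k))² ≤ 2k / (m² + k²)². -/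
open Classical in
/-- The exponential regulator `r̄(q;k) = ‖q‖²/(exp(‖q‖²/k²) − 1)`, extended
continuously by `r̄(0;k) = k²`. -/
noncomputable def rbar (d : ℕ) (q : EuclideanSpace ℝ (Fin d)) (k : ℝ) : ℝ :=
  if q = 0 then k ^ 2 else ‖q‖ ^ 2 / (Real.exp (‖q‖ ^ 2 / k ^ 2) - 1)

/-!
With `a = ‖q‖²` and `E = exp (a / k²)`, the regulator is `r = a / (E - 1)` and
`∂ₖ r = 2 a² E / (k³ (E - 1)²)`. Putting `β = √(∂ₖ r / 2k)`, the inequality `u e^{u/2} ≤ e^u - 1`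
(that is, `u ≤ 2 sinh (u / 2)`) at `u = a / k²` gives `β ≤ 1`, and `E ≥ 1` gives
`β k² ≤ a E / (E - 1) = a + r`. Hence `β (m² + k²) ≤ m² + a + r ≤ κ₂ + r`; squaring gives the claim.
At `q = 0` we have `r = k²` and `β = 1`, and the same argument applies.
-/

open Real

theorem sq_mul_exp_le_sq_exp_sub_one (u : ℝ) : u ^ 2 * exp u ≤ (exp u - 1) ^ 2 := by
  have hsinh : (u / 2) ^ 2 ≤ sinh (u / 2) ^ 2 := by
    rw [sq_le_sq, abs_sinh]
    exact self_le_sinh_iff.mpr (abs_nonneg _)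
  have hexp : exp u - 1 = exp (u / 2) * (2 * sinh (u / 2)) := by
    rw [sinh_eq, exp_neg]
    field_simp
    rw [← exp_nat_mul]
    ring_nf
  calc u ^ 2 * exp u = exp (u / 2) ^ 2 * (4 * (u / 2) ^ 2) := by
        rw [← exp_nat_mul]; ring_nf
    _ ≤ exp (u / 2) ^ 2 * (4 * sinh (u / 2) ^ 2) := by gcongr
    _ = (exp u - 1) ^ 2 := by rw [hexp]; ring

theorem div_sq_le_div_sq_of_le {D k a R m κ : ℝ} (hk : 0 < k) (haR : 0 ≤ a + R)
    (hD : D ≤ 2 * k) (hDk : k ^ 3 * D ≤ 2 * (a + R) ^ 2) (hκ : m ^ 2 + a ≤ κ) :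
    D / (κ + R) ^ 2 ≤ 2 * k / (m ^ 2 + k ^ 2) ^ 2 := by
  rcases le_or_gt D 0 with hD0 | hD0
  · exact (div_nonpos_of_nonpos_of_nonneg hD0 (sq_nonneg _)).trans (by positivity)
  set β := √(D / (2 * k)) with hβ
  have hDβ : D = 2 * k * β ^ 2 := by
    rw [hβ, sq_sqrt (by positivity)]
    field_simp
  have hβ1 : β ≤ 1 := sqrt_le_one.mpr ((div_le_one (by positivity)).mpr hD)
  have hβk : β * k ^ 2 ≤ a + R := by
    have hsq : D / (2 * k) ≤ ((a + R) / k ^ 2) ^ 2 := by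
      rw [div_pow, div_le_div_iff₀ (by positivity) (by positivity)]
      nlinarith
    exact (le_div_iff₀ (by positivity)).mp (sqrt_le_iff.mpr ⟨by positivity, hsq⟩)
  have hκR : β * (m ^ 2 + k ^ 2) ≤ κ + R := by
    nlinarith [sq_nonneg m, sqrt_nonneg (D / (2 * k))]
  have hpos : 0 < κ + R := by
    nlinarith [sq_nonneg m, sqrt_pos.mpr (show 0 < D / (2 * k) by positivity)]
  rw [div_le_div_iff₀ (by positivity) (by positivity), hDβ]
  nlinarith [pow_le_pow_left₀ (by positivity) hκR 2]

theorem hasDerivAt_div_exp_div_sq_sub_one {a k : ℝ} (ha : a ≠ 0) (hk : k ≠ 0) :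
    HasDerivAt (fun s => a / (exp (a / s ^ 2) - 1))
      (2 * a ^ 2 * exp (a / k ^ 2) / (k ^ 3 * (exp (a / k ^ 2) - 1) ^ 2)) k := by
  have hE : exp (a / k ^ 2) - 1 ≠ 0 := by
    rw [sub_ne_zero, Ne, exp_eq_one_iff]
    positivity
  have hinner := (hasDerivAt_const k a).fun_div (hasDerivAt_pow 2 k) (pow_ne_zero 2 hk)
  refine ((hasDerivAt_const k a).fun_div (hinner.exp.sub_const 1) hE).congr_deriv ?_
  field_simp
  ring

section rbar

variable {d : ℕ} {q : EuclideanSpace ℝ (Fin d)} {k : ℝ}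

theorem rbar_zero : rbar d 0 k = k ^ 2 := if_pos rfl

theorem rbar_of_ne_zero (hq : q ≠ 0) :
    rbar d q k = ‖q‖ ^ 2 / (exp (‖q‖ ^ 2 / k ^ 2) - 1) := if_neg hq

theorem rbar_nonneg : 0 ≤ rbar d q k := by
  by_cases hq : q = 0
  · rw [hq, rbar_zero]
    positivity
  · rw [rbar_of_ne_zero hq]
    exact div_nonneg (sq_nonneg _) (sub_nonneg.mpr (one_le_exp (by positivity)))

theorem deriv_rbar_zero : deriv (fun s => rbar d 0 s) k = 2 * k := by
  simp [rbar_zero]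

theorem deriv_rbar_of_ne_zero (hq : q ≠ 0) (hk : k ≠ 0) :
    deriv (fun s => rbar d q s) k =
      2 * (‖q‖ ^ 2) ^ 2 * exp (‖q‖ ^ 2 / k ^ 2) / (k ^ 3 * (exp (‖q‖ ^ 2 / k ^ 2) - 1) ^ 2) := by
  simp only [rbar_of_ne_zero hq]
  exact (hasDerivAt_div_exp_div_sq_sub_one (pow_ne_zero 2 (norm_ne_zero_iff.mpr hq)) hk).deriv

theorem deriv_rbar_le (hk : 0 < k) : deriv (fun s => rbar d q s) k ≤ 2 * k := by
  by_cases hq : q = 0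
  · rw [hq, deriv_rbar_zero]
  rw [deriv_rbar_of_ne_zero hq hk.ne']
  have ha : 0 < ‖q‖ ^ 2 := pow_pos (norm_pos_iff.mpr hq) 2
  set a := ‖q‖ ^ 2
  set E := exp (a / k ^ 2)
  have hE : 0 < E - 1 := sub_pos.mpr (one_lt_exp_iff.mpr (by positivity))
  rw [div_le_iff₀ (by positivity)]
  calc 2 * a ^ 2 * E = 2 * k ^ 4 * ((a / k ^ 2) ^ 2 * E) := by field_simp
    _ ≤ 2 * k ^ 4 * (E - 1) ^ 2 := by gcongr; exact sq_mul_exp_le_sq_exp_sub_one _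
    _ = 2 * k * (k ^ 3 * (E - 1) ^ 2) := by ring

theorem pow_three_mul_deriv_rbar_le (hk : k ≠ 0) :
    k ^ 3 * deriv (fun s => rbar d q s) k ≤ 2 * (‖q‖ ^ 2 + rbar d q k) ^ 2 := by
  by_cases hq : q = 0
  · rw [hq, deriv_rbar_zero, rbar_zero, norm_zero]
    exact le_of_eq (by ring)
  rw [deriv_rbar_of_ne_zero hq hk, rbar_of_ne_zero hq]
  have ha : 0 < ‖q‖ ^ 2 := pow_pos (norm_pos_iff.mpr hq) 2
  set a := ‖q‖ ^ 2
  set E := exp (a / k ^ 2)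
  have hE : 1 < E := one_lt_exp_iff.mpr (by positivity)
  have hE1 : E - 1 ≠ 0 := (sub_pos.mpr hE).ne'
  calc k ^ 3 * (2 * a ^ 2 * E / (k ^ 3 * (E - 1) ^ 2)) = 2 * (a ^ 2 * E / (E - 1) ^ 2) := by
        field_simp
    _ ≤ 2 * (a ^ 2 * E ^ 2 / (E - 1) ^ 2) := by gcongr; nlinarith
    _ = 2 * (a + a / (E - 1)) ^ 2 := by field_simp; ring

end rbar

theorem stmt_15_general (d : ℕ) (m k : ℝ) (hk : 0 < k)
    (κ₂ : EuclideanSpace ℝ (Fin d) → ℝ)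
    (hκ : ∀ q : EuclideanSpace ℝ (Fin d), m ^ 2 + ‖q‖ ^ 2 ≤ κ₂ q) :
    ∀ q : EuclideanSpace ℝ (Fin d),
      deriv (fun s => rbar d q s) k / (κ₂ q + rbar d q k) ^ 2
        ≤ 2 * k / (m ^ 2 + k ^ 2) ^ 2 := by
  intro q
  exact div_sq_le_div_sq_of_le hk (add_nonneg (sq_nonneg _) rbar_nonneg) (deriv_rbar_le hk)
    (pow_three_mul_deriv_rbar_le hk.ne') (hκ q)

theorem stmt_15 (d : ℕ) (hd : 1 ≤ d) (m k : ℝ) (hk : 0 < k)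
    (κ₂ : EuclideanSpace ℝ (Fin d) → ℝ)
    (hκ : ∀ q : EuclideanSpace ℝ (Fin d), m ^ 2 + ‖q‖ ^ 2 ≤ κ₂ q) :
    ∀ q : EuclideanSpace ℝ (Fin d),
      deriv (fun s => rbar d q s) k / (κ₂ q + rbar d q k) ^ 2
        ≤ 2 * k / (m ^ 2 + k ^ 2) ^ 2 :=
  stmt_15_general d m k hk κ₂ hκ
end
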